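/- arXiv:math/0308279 — 4 statements merged into one kernel-verified Lean document; each statement's English description precedes it below -/
import Mathlib

section
/- Fix d > 0. On ℝ² with the Minkowski form ⟨a,b⟩ = a₁b₁ − a₂b₂, let z(t,ε) = ε·(sinh t, cosh t) for ε ∈ {±1}, and for g ∈ ℝ² let H_g = {a ∈ ℝ² : ⟨a,g⟩ ≥ −1}. Then the intersection ⋂ H_{z(md,ε)} over all m ∈ ℤ and ε ∈ {±1} consists of exactly one point, namely the origin (0,0). -/
open Real

theorem stmt3 (d : ℝ) (hd : 0 < d) :
    {a : ℝ × ℝ | ∀ m : ℤ, ∀ ε : ℝ, (ε = 1 ∨ ε = -1) →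
        a.1 * (ε * Real.sinh ((m : ℝ) * d)) - a.2 * (ε * Real.cosh ((m : ℝ) * d)) ≥ -1}
      = {((0 : ℝ), (0 : ℝ))} := by
  ext a
  simp only [Set.mem_setOf_eq, Set.mem_singleton_iff]
  constructor
  · intro h
    have h1 : ∀ m : ℤ, a.1 * Real.sinh ((m : ℝ) * d) - a.2 * Real.cosh ((m : ℝ) * d) ≥ -1 := by
      intro m
      have := h m 1 (Or.inl rfl)
      linarith [this]
    have h2 : ∀ m : ℤ, a.1 * Real.sinh ((m : ℝ) * d) - a.2 * Real.cosh ((m : ℝ) * d) ≤ 1 := by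
      intro m
      have := h m (-1) (Or.inr rfl)
      nlinarith [this]
    -- |a.2| * cosh(m d) ≤ 1 for all m
    have key2 : ∀ m : ℤ, |a.2| * Real.cosh ((m : ℝ) * d) ≤ 1 := by
      intro m
      have hm1 := h1 m
      have hm2 := h2 m
      have hn1 := h1 (-m)
      have hn2 := h2 (-m)
      have hcast : ((-m : ℤ) : ℝ) = -(m : ℝ) := by push_cast; ring
      rw [hcast] at hn1 hn2
      rw [show -(m : ℝ) * d = -((m : ℝ) * d) by ring, Real.sinh_neg, Real.cosh_neg] at hn1 hn2
      have hc : 0 ≤ Real.cosh ((m : ℝ) * d) := (Real.cosh_pos _).le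
      rcases abs_cases a.2 with ⟨he, _⟩ | ⟨he, _⟩ <;> rw [he] <;> nlinarith
    have ha2 : a.2 = 0 := by
      by_contra h2ne
      have habs : 0 < |a.2| := abs_pos.mpr h2ne
      obtain ⟨n, hn⟩ := exists_nat_gt ((1 / |a.2|) / d)
      have hnd : (n : ℝ) * d > 1 / |a.2| := (div_lt_iff₀ hd).mp hn
      have hnd0 : 0 < (n : ℝ) * d := lt_trans (by positivity) hnd
      have hcosh : Real.cosh ((n : ℝ) * d) > (n : ℝ) * d := by
        nlinarith [Real.self_lt_sinh_iff.mpr hnd0, Real.sinh_lt_cosh ((n : ℝ) * d)]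
      have := key2 (n : ℤ)
      rw [Int.cast_natCast] at this
      have : |a.2| * Real.cosh ((n : ℝ) * d) > 1 := by
        calc 1 = |a.2| * (1 / |a.2|) := by field_simp
        _ < |a.2| * ((n:ℝ)*d) := by exact (mul_lt_mul_iff_right₀ habs).mpr hnd
        _ < |a.2| * Real.cosh ((n : ℝ) * d) := (mul_lt_mul_iff_right₀ habs).mpr hcosh
      linarith [key2 (n : ℤ), this, (Int.cast_natCast (R := ℝ) n)]
    have ha1 : a.1 = 0 := by
      by_contra h1ne
      have habs : 0 < |a.1| := abs_pos.mpr h1ne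
      obtain ⟨n, hn⟩ := exists_nat_gt ((1 / |a.1|) / d)
      have hnd : (n : ℝ) * d > 1 / |a.1| := (div_lt_iff₀ hd).mp hn
      have hnd0 : 0 < (n : ℝ) * d := lt_trans (by positivity) hnd
      have hsinh : Real.sinh ((n : ℝ) * d) > (n : ℝ) * d := Real.self_lt_sinh_iff.mpr hnd0
      have hm1 := h1 (n : ℤ)
      have hm2 := h2 (n : ℤ)
      rw [Int.cast_natCast, ha2] at hm1 hm2
      simp only [zero_mul, sub_zero] at hm1 hm2
      have hbig : 1 < Real.sinh ((n : ℝ) * d) * |a.1| := (div_lt_iff₀ habs).mp (hnd.trans hsinh)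
      rcases abs_cases a.1 with ⟨he, _⟩ | ⟨he, _⟩ <;> rw [he] at hbig <;> nlinarith
    exact Prod.ext ha1 ha2
  · intro h m ε hε
    rw [h]
    simp
end

section
/- Fix d > 0 and let P = ⋃_{m∈ℤ} {a ∈ ℝ² : |a₁ sinh(md) − a₂ cosh(md)| ≤ 1}. Then the contraction map a ↦ a/√(−⟨a,a⟩), restricted to ∂P ∩ L (the frontier of P intersected with the cone L = {a : ⟨a,a⟩ < 0}), is a homeomorphism onto the hyperbola G = {a ∈ ℝ² : ⟨a,a⟩ = −1}, and it is equivariant with respect to the linear action of Γ_d, i.e. it commutes with every map a ↦ ε·B(md)·a. -/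
open Real

/-- The action of the element `z(md, ε) ∈ Γ_d`: the map `a ↦ ε·B(md)·a` with
`B(s)` the boost matrix `[[cosh s, sinh s],[sinh s, cosh s]]`. -/
noncomputable def boost (d : ℝ) (m : ℤ) (ε : ℝ) : ℝ × ℝ → ℝ × ℝ :=
  fun a => ε • (a.1 * Real.cosh ((m : ℝ) * d) + a.2 * Real.sinh ((m : ℝ) * d),
                a.1 * Real.sinh ((m : ℝ) * d) + a.2 * Real.cosh ((m : ℝ) * d))

/-- `P = ⋃_{m∈ℤ} {a : |a₁ sinh(md) − a₂ cosh(md)| ≤ 1}`. -/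
noncomputable def Pol (d : ℝ) : Set (ℝ × ℝ) :=
  ⋃ m : ℤ, {a : ℝ × ℝ | |a.1 * Real.sinh ((m : ℝ) * d) - a.2 * Real.cosh ((m : ℝ) * d)| ≤ 1}

/-- The cone `L = {a ∈ ℝ² : ⟨a,a⟩ < 0}` for the Minkowski form `⟨a,b⟩ = a₁b₁ − a₂b₂`. -/
def Lcone : Set (ℝ × ℝ) := {a | a.1 * a.1 - a.2 * a.2 < 0}

/-- The hyperbola `G = {a ∈ ℝ² : ⟨a,a⟩ = −1}`. -/
def Ghyp : Set (ℝ × ℝ) := {a | a.1 * a.1 - a.2 * a.2 = -1}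

/-- The contraction `a ↦ a/√(−⟨a,a⟩)`. -/
noncomputable def contr (a : ℝ × ℝ) : ℝ × ℝ :=
  (Real.sqrt (-(a.1 * a.1 - a.2 * a.2)))⁻¹ • a

/-!
On the cone `L` write `a = ±N(a)·(sinh τ, cosh τ)` with `N(a) = √(-⟨a,a⟩)` and `τ` the rapidity of
`a`. Then `|⟨a, z(md,ε)⟩| = N(a) cosh(τ - md)`, so inside `L` the set `P` is the sublevel set
`{g ≤ 1}` of the gauge `g(a) = N(a) cosh(dist(τ, dℤ))`, which is continuous and positively
homogeneous of degree one. Hence `∂P ∩ L = {g = 1}`, and radial projection is a homeomorphism from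
this level set onto the level set `{N = 1} = G`, with inverse `b ↦ b / g(b)`. Since `Γ_d` acts by
isometries of the form commuting with scalars, it commutes with the contraction.
-/

open Set Filter Topology

section Radial

variable {E : Type*} [AddCommGroup E] [Module ℝ E] {U S : Set E} {f g : E → ℝ}

theorem inv_smul_mem_levelSet (hUcone : ∀ x ∈ U, ∀ s : ℝ, 0 < s → s • x ∈ U)
    (hf : ∀ x ∈ U, ∀ s : ℝ, 0 < s → f (s • x) = s * f x) (hf0 : ∀ x ∈ U, 0 < f x)
    {x : E} (hx : x ∈ U) : (f x)⁻¹ • x ∈ {y | y ∈ U ∧ f y = 1} :=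
  ⟨hUcone x hx _ (inv_pos.2 (hf0 x hx)),
    by rw [hf x hx _ (inv_pos.2 (hf0 x hx)), inv_mul_cancel₀ (hf0 x hx).ne']⟩

theorem inv_smul_inv_smul_of_eq_one (hg : ∀ x ∈ U, ∀ s : ℝ, 0 < s → g (s • x) = s * g x)
    (hf0 : ∀ x ∈ U, 0 < f x) {x : E} (hx : x ∈ U) (hgx : g x = 1) :
    (g ((f x)⁻¹ • x))⁻¹ • (f x)⁻¹ • x = x := by
  have := hf0 x hx
  rw [hg x hx _ (inv_pos.2 this), hgx, mul_one, inv_inv, smul_smul, mul_inv_cancel₀ this.ne',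
    one_smul]

variable [TopologicalSpace E] [ContinuousSMul ℝ E]

noncomputable def radialHomeomorph (hUcone : ∀ x ∈ U, ∀ s : ℝ, 0 < s → s • x ∈ U)
    (hfc : ContinuousOn f U) (hf : ∀ x ∈ U, ∀ s : ℝ, 0 < s → f (s • x) = s * f x)
    (hf0 : ∀ x ∈ U, 0 < f x) (hgc : ContinuousOn g U)
    (hg : ∀ x ∈ U, ∀ s : ℝ, 0 < s → g (s • x) = s * g x) (hg0 : ∀ x ∈ U, 0 < g x) :
    {x | x ∈ U ∧ g x = 1} ≃ₜ {x | x ∈ U ∧ f x = 1} where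
  toFun x := ⟨(f x)⁻¹ • x, inv_smul_mem_levelSet hUcone hf hf0 x.2.1⟩
  invFun y := ⟨(g y)⁻¹ • y, inv_smul_mem_levelSet hUcone hg hg0 y.2.1⟩
  left_inv x := Subtype.ext (inv_smul_inv_smul_of_eq_one hg hf0 x.2.1 x.2.2)
  right_inv y := Subtype.ext (inv_smul_inv_smul_of_eq_one hf hg0 y.2.1 y.2.2)
  continuous_toFun := .subtype_mk (.smul
    ((hfc.comp_continuous continuous_subtype_val fun x => x.2.1).inv₀ fun x => (hf0 x.1 x.2.1).ne')
    continuous_subtype_val) _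
  continuous_invFun := .subtype_mk (.smul
    ((hgc.comp_continuous continuous_subtype_val fun y => y.2.1).inv₀ fun y => (hg0 y.1 y.2.1).ne')
    continuous_subtype_val) _

theorem frontier_inter_eq_of_homogeneous (hU : IsOpen U)
    (hUcone : ∀ x ∈ U, ∀ s : ℝ, 0 < s → s • x ∈ U) (hfc : ContinuousOn f U)
    (hf : ∀ x ∈ U, ∀ s : ℝ, 0 < s → f (s • x) = s * f x) (hS : ∀ x ∈ U, x ∈ S ↔ f x ≤ 1) :
    frontier S ∩ U = {x | x ∈ U ∧ f x = 1} := by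
  ext x
  refine ⟨fun ⟨⟨hcl, hint⟩, hx⟩ => ⟨hx, le_antisymm ?_ ?_⟩, fun ⟨hx, hfx⟩ => ⟨⟨?_, ?_⟩, hx⟩⟩
  · by_contra! hlt
    obtain ⟨y, ⟨hyU, hy⟩, hyS⟩ := _root_.mem_closure_iff.1 hcl _
      (hfc.isOpen_inter_preimage hU isOpen_Ioi) ⟨hx, hlt⟩
    exact (not_le.2 hy) ((hS y hyU).1 hyS)
  · by_contra! hlt
    have hsub : U ∩ f ⁻¹' Iio 1 ⊆ S := fun y ⟨hyU, hy⟩ => (hS y hyU).2 (le_of_lt hy)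
    exact hint (interior_maximal hsub (hfc.isOpen_inter_preimage hU isOpen_Iio) ⟨hx, hlt⟩)
  · exact subset_closure ((hS x hx).2 hfx.le)
  · intro hint
    have hlim : Tendsto (fun s : ℝ => s • x) (𝓝[>] 1) (𝓝 x) :=
      ((continuous_id.smul continuous_const).tendsto' 1 x (one_smul ℝ x)).mono_left
        nhdsWithin_le_nhds
    obtain ⟨s, hsS, hs⟩ :=
      ((hlim.eventually (isOpen_interior.mem_nhds hint)).and self_mem_nhdsWithin).exists
    have hsx : s • x ∈ U := hUcone x hx s (zero_lt_one.trans hs)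
    have := (hS _ hsx).1 (interior_subset hsS)
    rw [hf x hx s (zero_lt_one.trans hs), hfx, mul_one] at this
    exact not_le.2 hs this

end Radial

noncomputable def timelikeNorm (a : ℝ × ℝ) : ℝ := √(-(a.1 * a.1 - a.2 * a.2))

theorem contr_eq_inv_timelikeNorm_smul (a : ℝ × ℝ) : contr a = (timelikeNorm a)⁻¹ • a := rfl

theorem mem_Lcone_iff_sq_lt {a : ℝ × ℝ} : a ∈ Lcone ↔ a.1 ^ 2 < a.2 ^ 2 := by
  simp only [Lcone, mem_ofPred_eq, sq, sub_neg]

theorem snd_ne_zero_of_mem_Lcone {a : ℝ × ℝ} (ha : a ∈ Lcone) : a.2 ≠ 0 := by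
  rintro h
  rw [mem_Lcone_iff_sq_lt, h] at ha
  nlinarith [sq_nonneg a.1]

theorem isOpen_Lcone : IsOpen Lcone :=
  isOpen_lt (by fun_prop) continuous_const

theorem smul_mem_Lcone {a : ℝ × ℝ} (ha : a ∈ Lcone) {s : ℝ} (hs : s ≠ 0) : s • a ∈ Lcone := by
  have : 0 < s ^ 2 := by positivity
  simp only [Lcone, mem_ofPred_eq, Prod.smul_fst, Prod.smul_snd, smul_eq_mul] at ha ⊢
  nlinarith

theorem Ghyp_eq : Ghyp = {a | a ∈ Lcone ∧ timelikeNorm a = 1} := by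
  ext a
  simp only [Ghyp, Lcone, timelikeNorm, mem_ofPred_eq, Real.sqrt_eq_one]
  constructor
  · intro h; constructor <;> linarith
  · intro h; linarith [h.2]

theorem timelikeNorm_pos {a : ℝ × ℝ} (ha : a ∈ Lcone) : 0 < timelikeNorm a :=
  Real.sqrt_pos.2 (neg_pos.2 ha)

theorem timelikeNorm_sq {a : ℝ × ℝ} (ha : a ∈ Lcone) : timelikeNorm a ^ 2 = a.2 ^ 2 - a.1 ^ 2 := by
  rw [timelikeNorm, Real.sq_sqrt (neg_pos.2 ha).le]
  ring

theorem continuous_timelikeNorm : Continuous timelikeNorm := by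
  unfold timelikeNorm; fun_prop

theorem timelikeNorm_smul (s : ℝ) (a : ℝ × ℝ) : timelikeNorm (s • a) = |s| * timelikeNorm a := by
  have : -((s • a).1 * (s • a).1 - (s • a).2 * (s • a).2) = s ^ 2 * -(a.1 * a.1 - a.2 * a.2) := by
    simp only [Prod.smul_fst, Prod.smul_snd, smul_eq_mul]; ring
  rw [timelikeNorm, this, Real.sqrt_mul (sq_nonneg s), Real.sqrt_sq_eq_abs, timelikeNorm]

theorem timelikeNorm_boost (d : ℝ) (m : ℤ) (ε : ℝ) (a : ℝ × ℝ) :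
    timelikeNorm (boost d m ε a) = |ε| * timelikeNorm a := by
  have h := Real.cosh_sq_sub_sinh_sq ((m : ℝ) * d)
  have : -((boost d m ε a).1 * (boost d m ε a).1 - (boost d m ε a).2 * (boost d m ε a).2) =
      ε ^ 2 * -(a.1 * a.1 - a.2 * a.2) := by
    simp only [boost, Prod.smul_fst, Prod.smul_snd, smul_eq_mul]
    linear_combination -ε ^ 2 * (a.1 * a.1 - a.2 * a.2) * h
  rw [timelikeNorm, this, Real.sqrt_mul (sq_nonneg ε), Real.sqrt_sq_eq_abs, timelikeNorm]

theorem boost_smul (d : ℝ) (m : ℤ) (ε s : ℝ) (a : ℝ × ℝ) :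
    boost d m ε (s • a) = s • boost d m ε a := by
  ext <;> simp only [boost, Prod.smul_fst, Prod.smul_snd, smul_eq_mul] <;> ring

theorem contr_boost (d : ℝ) (m : ℤ) {ε : ℝ} (hε : |ε| = 1) (a : ℝ × ℝ) :
    contr (boost d m ε a) = boost d m ε (contr a) := by
  rw [contr_eq_inv_timelikeNorm_smul, contr_eq_inv_timelikeNorm_smul, timelikeNorm_boost, hε,
    one_mul, boost_smul]

/-- The rapidity `τ` of a timelike vector `a = ±N(a)·(sinh τ, cosh τ)`. -/
noncomputable def rapidity (a : ℝ × ℝ) : ℝ :=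
  Real.arsinh (a.1 * a.2 / (|a.2| * timelikeNorm a))

theorem rapidity_smul (a : ℝ × ℝ) {s : ℝ} (hs : s ≠ 0) : rapidity (s • a) = rapidity a := by
  simp only [rapidity, timelikeNorm_smul, Prod.smul_fst, Prod.smul_snd, smul_eq_mul, abs_mul]
  congr 1
  rw [show s * a.1 * (s * a.2) = s ^ 2 * (a.1 * a.2) by ring,
    show |s| * |a.2| * (|s| * timelikeNorm a) = s ^ 2 * (|a.2| * timelikeNorm a) by
      rw [← sq_abs s]; ring,
    mul_div_mul_left _ _ (pow_ne_zero 2 hs)]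

theorem continuousOn_rapidity : ContinuousOn rapidity Lcone :=
  Real.continuous_arsinh.comp_continuousOn <| .div (by fun_prop)
    ((continuous_abs.comp continuous_snd).mul continuous_timelikeNorm).continuousOn
    fun _ ha => mul_ne_zero (abs_ne_zero.2 (snd_ne_zero_of_mem_Lcone ha)) (timelikeNorm_pos ha).ne'

theorem abs_sinh_sub_cosh_eq {a : ℝ × ℝ} (ha : a ∈ Lcone) (s : ℝ) :
    |a.1 * sinh s - a.2 * cosh s| = timelikeNorm a * cosh (rapidity a - s) := by
  have hN := timelikeNorm_pos ha
  have hN2 := timelikeNorm_sq ha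
  have ha2 : 0 < |a.2| := abs_pos.2 (snd_ne_zero_of_mem_Lcone ha)
  have hsinh : sinh (rapidity a) = a.1 * a.2 / (|a.2| * timelikeNorm a) :=
    Real.sinh_arsinh _
  have hcosh : cosh (rapidity a) = |a.2| / timelikeNorm a := by
    rw [rapidity, Real.cosh_arsinh, ← Real.sqrt_sq (div_pos ha2 hN).le]
    congr 1
    field_simp
    linear_combination |a.2| ^ 2 * hN2 + -(a.1 ^ 2 + |a.2| ^ 2) * sq_abs a.2
  have key : |a.2| * (timelikeNorm a * cosh (rapidity a - s)) =
      a.2 * (a.2 * cosh s - a.1 * sinh s) := by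
    rw [Real.cosh_sub, hsinh, hcosh]
    field_simp
    rw [sq_abs]
    ring
  refine mul_left_cancel₀ ha2.ne' ?_
  calc |a.2| * |a.1 * sinh s - a.2 * cosh s|
      = |a.2 * (a.2 * cosh s - a.1 * sinh s)| := by rw [abs_mul, abs_sub_comm]
    _ = |a.2| * (timelikeNorm a * cosh (rapidity a - s)) := by
      rw [← key, abs_of_nonneg (by positivity)]

theorem exists_forall_abs_sub_int_mul_le (d t : ℝ) :
    ∃ m : ℤ, ∀ n : ℤ, |t - m * d| ≤ |t - n * d| := by
  rcases eq_or_ne d 0 with rfl | hd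
  · exact ⟨0, fun n => by simp⟩
  refine ⟨round (t / d), fun n => ?_⟩
  have hscale : ∀ k : ℤ, |t - k * d| = |t / d - k| * |d| := fun k => by
    rw [← abs_mul, sub_mul, div_mul_cancel₀ t hd]
  rw [hscale, hscale]
  exact mul_le_mul_of_nonneg_right (round_le _ n) (abs_nonneg d)

theorem exists_infDist_range_int_mul_eq (d t : ℝ) :
    ∃ m : ℤ, Metric.infDist t (range fun n : ℤ => n * d) = |t - m * d| := by
  obtain ⟨m, hm⟩ := exists_forall_abs_sub_int_mul_le d t
  refine ⟨m, le_antisymm (Metric.infDist_le_dist_of_mem ⟨m, rfl⟩) ?_⟩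
  rw [Metric.le_infDist (range_nonempty _)]
  rintro _ ⟨n, rfl⟩
  exact hm n

noncomputable def polGauge (d : ℝ) (a : ℝ × ℝ) : ℝ :=
  timelikeNorm a * cosh (Metric.infDist (rapidity a) (range fun n : ℤ => n * d))

theorem mem_Pol_iff_polGauge_le {d : ℝ} {a : ℝ × ℝ} (ha : a ∈ Lcone) :
    a ∈ Pol d ↔ polGauge d a ≤ 1 := by
  simp only [Pol, mem_iUnion, mem_ofPred_eq, abs_sinh_sub_cosh_eq ha, polGauge]
  constructor
  · rintro ⟨m, hm⟩
    refine le_trans (mul_le_mul_of_nonneg_left ?_ (timelikeNorm_pos ha).le) hm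
    rw [Real.cosh_le_cosh, abs_of_nonneg Metric.infDist_nonneg]
    exact Metric.infDist_le_dist_of_mem ⟨m, rfl⟩
  · intro h
    obtain ⟨m, hm⟩ := exists_infDist_range_int_mul_eq d (rapidity a)
    exact ⟨m, by rwa [← Real.cosh_abs, ← hm]⟩

theorem polGauge_pos (d : ℝ) {a : ℝ × ℝ} (ha : a ∈ Lcone) : 0 < polGauge d a :=
  mul_pos (timelikeNorm_pos ha) (Real.cosh_pos _)

theorem polGauge_smul (d : ℝ) (a : ℝ × ℝ) {s : ℝ} (hs : 0 < s) :
    polGauge d (s • a) = s * polGauge d a := by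
  rw [polGauge, polGauge, timelikeNorm_smul, rapidity_smul a hs.ne', abs_of_pos hs, mul_assoc]

theorem continuousOn_polGauge (d : ℝ) : ContinuousOn (polGauge d) Lcone :=
  continuous_timelikeNorm.continuousOn.mul (Real.continuous_cosh.comp_continuousOn
    ((Metric.continuous_infDist_pt _).comp_continuousOn continuousOn_rapidity))

theorem frontier_Pol_inter_Lcone (d : ℝ) :
    frontier (Pol d) ∩ Lcone = {a | a ∈ Lcone ∧ polGauge d a = 1} :=
  frontier_inter_eq_of_homogeneous isOpen_Lcone (fun _ ha _ hs => smul_mem_Lcone ha hs.ne')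
    (continuousOn_polGauge d) (fun a _ _ hs => polGauge_smul d a hs)
    (fun _ ha => mem_Pol_iff_polGauge_le ha)

theorem stmt5_general (d : ℝ) :
    (∃ h : ↥(frontier (Pol d) ∩ Lcone) ≃ₜ ↥Ghyp,
      ∀ x : ↥(frontier (Pol d) ∩ Lcone), (h x : ℝ × ℝ) = contr (x : ℝ × ℝ)) ∧
    (∀ m : ℤ, ∀ ε : ℝ, (ε = 1 ∨ ε = -1) → ∀ a ∈ frontier (Pol d) ∩ Lcone,
      contr (boost d m ε a) = boost d m ε (contr a)) := by
  have hcone : ∀ a ∈ Lcone, ∀ s : ℝ, 0 < s → s • a ∈ Lcone :=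
    fun _ ha _ hs => smul_mem_Lcone ha hs.ne'
  let radial := radialHomeomorph hcone continuous_timelikeNorm.continuousOn
    (fun a _ _ hs => by rw [timelikeNorm_smul, abs_of_pos hs]) (fun _ => timelikeNorm_pos)
    (continuousOn_polGauge d) (fun a _ _ hs => polGauge_smul d a hs) (fun _ => polGauge_pos d)
  refine ⟨⟨(Homeomorph.setCongr (frontier_Pol_inter_Lcone d)).trans
    (radial.trans (Homeomorph.setCongr Ghyp_eq.symm)), fun _ => rfl⟩, ?_⟩
  exact fun m ε hε a _ => contr_boost d m ((abs_eq zero_le_one).2 hε) a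

theorem stmt5 (d : ℝ) (hd : 0 < d) :
    (∃ h : ↥(frontier (Pol d) ∩ Lcone) ≃ₜ ↥Ghyp,
      ∀ x : ↥(frontier (Pol d) ∩ Lcone), (h x : ℝ × ℝ) = contr (x : ℝ × ℝ)) ∧
    (∀ m : ℤ, ∀ ε : ℝ, (ε = 1 ∨ ε = -1) → ∀ a ∈ frontier (Pol d) ∩ Lcone,
      contr (boost d m ε a) = boost d m ε (contr a)) :=
  stmt5_general d
end

section
/- Let tildeL = {(z,α,r) ∈ ℂ×ℝ×ℝ : 0 < r and |z| < r} and L = {(z,w) ∈ ℂ×ℂ : |z| < |w|}. Then the map π : tildeL → L defined by π(z,α,r) = (z, r·e^{iα}) is a covering map, and tildeL is simply connected; hence π is the universal covering of L. -/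
open Real

/-- `tildeL = {(z,α,r) ∈ ℂ×ℝ×ℝ : 0 < r, |z| < r}`. -/
def tL : Set (ℂ × ℝ × ℝ) := {x | 0 < x.2.2 ∧ ‖x.1‖ < x.2.2}

/-- `L = {(z,w) ∈ ℂ² : |z| < |w|}`. -/
def Lset : Set (ℂ × ℂ) := {p | ‖p.1‖ < ‖p.2‖}

/-- The covering map `π(z,α,r) = (z, r·e^{iα})` from `tildeL` to `L`. -/
noncomputable def piCover : ↥tL → ↥Lset :=
  fun x => ⟨(x.1.1, (x.1.2.2 : ℂ) * Complex.exp ((x.1.2.1 : ℂ) * Complex.I)), by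
    obtain ⟨⟨z, α, r⟩, hr, hz⟩ := x
    simp only [Lset, Set.mem_setOf_eq, norm_mul, Complex.norm_exp_ofReal_mul_I,
      Complex.norm_real, Real.norm_eq_abs, mul_one, abs_of_pos hr]
    exact hz⟩

/-!
Via `(z, α, r) ↦ (z, log r + iα)`, the space `tildeL` is homeomorphic to the preimage of `L` under
`id × exp : ℂ × ℂ → ℂ × ℂ`, and `π` becomes the restriction of `id × exp` to that preimage. Since
`exp` is a covering map over `ℂ \ {0}`, so is `id × exp` over `ℂ × (ℂ \ {0}) ⊇ L`. Finally `tildeL`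
is convex, hence contractible.
-/

section

variable {E X Y I : Type*} [TopologicalSpace E] [TopologicalSpace X] [TopologicalSpace Y]
  [TopologicalSpace I] {f : E → X}

theorem IsEvenlyCovered.id_prodMap {x : X} (h : IsEvenlyCovered f x I) (y : Y) :
    IsEvenlyCovered (Prod.map (id : Y → Y) f) (y, x) I :=
  have ⟨inst, U, hxU, hU, hfU, H, hH⟩ := h
  ⟨inst, Set.univ ×ˢ U, ⟨trivial, hxU⟩, isOpen_univ.prod hU, isOpen_univ.prod hfU,
    { toFun e := (⟨(e.1.1, (H ⟨e.1.2, e.2.2⟩).1), trivial, (H _).1.2⟩, (H ⟨e.1.2, e.2.2⟩).2)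
      invFun p := ⟨(p.1.1.1, H.symm (⟨p.1.1.2, p.1.2.2⟩, p.2)), trivial, (H.symm _).2⟩
      left_inv _ := by simp
      right_inv _ := by simp
      continuous_toFun := by fun_prop
      continuous_invFun := by fun_prop }, fun _ ↦ by ext <;> simp [hH]⟩

theorem IsCoveringMapOn.id_prodMap {s : Set X} (hf : IsCoveringMapOn f s) :
    IsCoveringMapOn (Prod.map (id : Y → Y) f) (Set.univ ×ˢ s) :=
  fun p hp ↦ ((hf p.2 hp.2).id_prodMap p.1).to_isEvenlyCovered_preimage

end

theorem Lset_subset_univ_prod_compl_zero : Lset ⊆ Set.univ ×ˢ {0}ᶜ := fun p hp ↦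
  ⟨trivial, norm_pos_iff.mp ((norm_nonneg p.1).trans_lt hp)⟩

noncomputable def tLHomeomorphExpPreimage :
    tL ≃ₜ (Prod.map (id : ℂ → ℂ) Complex.exp ⁻¹' Lset) where
  toFun x := ⟨(x.1.1, (Real.log x.1.2.2 : ℂ) + x.1.2.1 * Complex.I), by
    simpa [Lset, Complex.norm_exp, Real.exp_log x.2.1] using x.2.2⟩
  invFun p := ⟨(p.1.1, p.1.2.im, Real.exp p.1.2.re), Real.exp_pos _, by
    simpa [Lset, Complex.norm_exp] using p.2⟩
  left_inv x := by ext <;> simp [Real.exp_log x.2.1]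
  right_inv p := by ext <;> simp
  continuous_toFun := by
    have hlog : Continuous fun x : tL ↦ Real.log x.1.2.2 :=
      (by fun_prop : Continuous fun x : tL ↦ x.1.2.2).log fun x ↦ x.2.1.ne'
    exact .subtype_mk
      (.prodMk (by fun_prop) (.add (Complex.continuous_ofReal.comp hlog) (by fun_prop))) _
  continuous_invFun := by fun_prop

theorem piCover_eq_restrictPreimage_comp :
    piCover = Lset.restrictPreimage (Prod.map id Complex.exp) ∘ tLHomeomorphExpPreimage := by
  ext x : 2
  refine Prod.ext rfl ?_
  simp [piCover, tLHomeomorphExpPreimage, Complex.exp_add, ← Complex.ofReal_exp,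
    Real.exp_log x.2.1]

theorem isCoveringMap_piCover : IsCoveringMap piCover := by
  rw [piCover_eq_restrictPreimage_comp]
  exact (Complex.isCoveringMapOn_exp.id_prodMap.mono Lset_subset_univ_prod_compl_zero
    ).isCoveringMap_restrictPreimage.comp_homeomorph _

theorem convex_tL : Convex ℝ tL := by
  refine convex_iff_forall_pos.mpr fun x hx y hy a b ha hb _ ↦ ⟨?_, ?_⟩
  · simp only [Prod.snd_add, Prod.smul_snd, smul_eq_mul]
    positivity [hx.1, hy.1]
  · calc ‖a • x.1 + b • y.1‖ ≤ a * ‖x.1‖ + b * ‖y.1‖ := by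
          simpa [norm_smul, abs_of_pos ha, abs_of_pos hb] using norm_add_le (a • x.1) (b • y.1)
      _ < a * x.2.2 + b * y.2.2 := by gcongr; exacts [hx.2, hy.2]

theorem stmt7 : IsCoveringMap piCover ∧ SimplyConnectedSpace ↥tL := by
  have : ContractibleSpace tL := convex_tL.contractibleSpace ⟨(0, 0, 1), one_pos, by simp⟩
  exact ⟨isCoveringMap_piCover, inferInstance⟩
end

section
/- Let tildeL = {(z,α,r) ∈ ℂ×ℝ×ℝ : 0 < r, |z| < r} and S = {(z,α,r) ∈ tildeL : r·cos α ≥ 1}. Then the connected components of S are exactly the sets C_n = {(z,α,r) ∈ tildeL : |α − 2πn| < π/2 and r·cos α ≥ 1} for n ∈ ℤ; in particular S has infinitely many connected components, and the component containing e = (0,0,1) is I_e = {(z,α,r) ∈ tildeL : |α| < π/2, r ≥ 1/cos α}. -/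
open Real

/-- `S = π^{-1}(Ī_ē) = {(z,α,r) ∈ tildeL : r·cos α ≥ 1}`. -/
noncomputable def Scone : Set (ℂ × ℝ × ℝ) := {x ∈ tL | 1 ≤ x.2.2 * Real.cos x.2.1}

/-- `C_n = {(z,α,r) ∈ tildeL : |α − 2πn| < π/2 and r·cos α ≥ 1}`. -/
noncomputable def Ccomp (n : ℤ) : Set (ℂ × ℝ × ℝ) :=
  {x ∈ tL | |x.2.1 - 2 * π * (n : ℝ)| < π / 2 ∧ 1 ≤ x.2.2 * Real.cos x.2.1}

/-- `I_e = {(z,α,r) ∈ tildeL : |α| < π/2, r ≥ 1/cos α}`. -/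
noncomputable def Ie : Set (ℂ × ℝ × ℝ) :=
  {x ∈ tL | |x.2.1| < π / 2 ∧ 1 / Real.cos x.2.1 ≤ x.2.2}

/-! ### Auxiliary material -/

/-- The open angular strip around `2πn`. -/
def Ucell (n : ℤ) : Set (ℂ × ℝ × ℝ) := {x | |x.2.1 - 2 * π * (n : ℝ)| < π / 2}

lemma isOpen_Ucell (n : ℤ) : IsOpen (Ucell n) := by
  have h : Ucell n = (fun x : ℂ × ℝ × ℝ => x.2.1) ⁻¹' Metric.ball (2 * π * (n : ℝ)) (π / 2) := by
    ext x; simp [Ucell, Metric.mem_ball, Real.dist_eq]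
  rw [h]
  exact Metric.isOpen_ball.preimage (continuous_snd.fst)

lemma Ucell_disjoint {n m : ℤ} (h : n ≠ m) : Disjoint (Ucell n) (Ucell m) := by
  rw [Set.disjoint_left]
  intro x h1 h2
  simp only [Ucell, Set.mem_setOf_eq] at h1 h2
  have hπ := pi_pos
  have habs : (1 : ℝ) ≤ |(n : ℝ) - (m : ℝ)| := by
    have h0 : n - m ≠ 0 := sub_ne_zero.mpr h
    have := Int.one_le_abs h0
    calc (1:ℝ) ≤ ((|n - m| : ℤ) : ℝ) := by exact_mod_cast this
      _ = |(n : ℝ) - (m : ℝ)| := by push_cast; try ring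
  rw [abs_lt] at h1 h2
  rcases abs_cases ((n : ℝ) - (m : ℝ)) with ⟨he, _⟩ | ⟨he, _⟩ <;> rw [he] at habs <;> nlinarith

lemma Ccomp_subset_Scone (n : ℤ) : Ccomp n ⊆ Scone := by
  rintro x ⟨h1, _, h3⟩; exact ⟨h1, h3⟩

lemma Ccomp_eq_inter (n : ℤ) : Ccomp n = Scone ∩ Ucell n := by
  ext x
  simp only [Ccomp, Scone, Ucell, Set.mem_setOf_eq, Set.mem_inter_iff, Set.mem_sep_iff]
  tauto

lemma mem_Ccomp_of_mem_Scone {x : ℂ × ℝ × ℝ} (hx : x ∈ Scone) : ∃ n : ℤ, x ∈ Ccomp n := by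
  obtain ⟨⟨hr, hz⟩, hc⟩ := hx
  set α := x.2.1 with hα
  have hπ := pi_pos
  have hcos : 0 < Real.cos α := by
    by_contra hcon
    push_neg at hcon
    nlinarith [mul_nonpos_of_nonneg_of_nonpos hr.le hcon]
  refine ⟨round (α / (2 * π)), ⟨hr, hz⟩, ?_, hc⟩
  set n := round (α / (2 * π)) with hn
  have h1 : |α / (2 * π) - (n : ℝ)| ≤ 1 / 2 := abs_sub_round _
  rw [abs_le] at h1
  have hd : α - 2 * π * (n : ℝ) = (α / (2 * π) - (n : ℝ)) * (2 * π) := by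
    field_simp
  have h2 : -π ≤ α - 2 * π * (n : ℝ) ∧ α - 2 * π * (n : ℝ) ≤ π := by
    rw [hd]; constructor <;> nlinarith [h1.1, h1.2]
  set β := α - 2 * π * (n : ℝ) with hβ
  have hcβ : Real.cos β = Real.cos α := by
    have hα' : α = β + (n : ℤ) * (2 * π) := by rw [hβ]; push_cast; ring
    rw [hα', Real.cos_add_int_mul_two_pi]
  by_contra hcon
  push_neg at hcon
  have : Real.cos β ≤ 0 := by
    rcases le_or_gt 0 β with hb | hb
    · have : π / 2 ≤ β := by rw [abs_of_nonneg hb] at hcon; exact hcon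
      exact Real.cos_nonpos_of_pi_div_two_le_of_le this (by linarith [h2.2])
    · have hneg : π / 2 ≤ -β := by rw [abs_of_neg hb] at hcon; exact hcon
      rw [← Real.cos_neg]
      exact Real.cos_nonpos_of_pi_div_two_le_of_le hneg (by linarith [h2.1])
  linarith [hcβ ▸ this, hcos]

lemma comb_lt {u v w1 w2 a b : ℝ} (h1 : u < w1) (h2 : v < w2)
    (ha : 0 ≤ a) (hb : 0 ≤ b) (hab : a + b = 1) : a * u + b * v < a * w1 + b * w2 := by
  rcases ha.eq_or_lt with h | h
  · have hb1 : b = 1 := by linarith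
    rw [← h, hb1]; simpa using h2
  · have t1 := mul_lt_mul_of_pos_left h1 h
    have t2 := mul_le_mul_of_nonneg_left h2.le hb
    linarith

lemma comb_pos {r1 r2 a b : ℝ} (h1 : 0 < r1) (h2 : 0 < r2)
    (ha : 0 ≤ a) (hb : 0 ≤ b) (hab : a + b = 1) : 0 < a * r1 + b * r2 := by
  rcases ha.eq_or_lt with h | h
  · have hb1 : b = 1 := by linarith
    rw [← h, hb1]; simpa using h2
  · nlinarith [mul_pos h h1, mul_nonneg hb h2.le]

lemma am_gm_aux {x y : ℝ} (hx : 0 < x) (hy : 0 < y) (h : 1 ≤ x * y) : 2 ≤ x + y := by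
  nlinarith [sq_nonneg (x - y), sq_nonneg (x + y - 2)]

lemma comb_sec {r1 r2 c1 c2 a b : ℝ} (h1 : 1 ≤ r1 * c1) (h2 : 1 ≤ r2 * c2)
    (hxy : 2 ≤ r1 * c2 + r2 * c1) (ha : 0 ≤ a) (hb : 0 ≤ b) (hab : a + b = 1) :
    1 ≤ (a * r1 + b * r2) * (a * c1 + b * c2) := by
  nlinarith [mul_nonneg (mul_nonneg ha ha) (sub_nonneg.mpr h1),
    mul_nonneg (mul_nonneg hb hb) (sub_nonneg.mpr h2),
    mul_nonneg (mul_nonneg ha hb) (sub_nonneg.mpr hxy)]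

lemma convex_Ccomp (n : ℤ) : Convex ℝ (Ccomp n) := by
  intro x hx y hy a b ha hb hab
  obtain ⟨⟨hr1, hz1⟩, hα1, hc1⟩ := hx
  obtain ⟨⟨hr2, hz2⟩, hα2, hc2⟩ := hy
  have hπ := pi_pos
  set c : ℝ := 2 * π * (n : ℝ) with hc
  set β1 : ℝ := x.2.1 - c with hβ1
  set β2 : ℝ := y.2.1 - c with hβ2
  have hb1 : |β1| < π / 2 := hα1
  have hb2 : |β2| < π / 2 := hα2
  rw [abs_lt] at hb1 hb2
  have hcos1 : Real.cos β1 = Real.cos x.2.1 := by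
    have : x.2.1 = β1 + (n : ℤ) * (2 * π) := by rw [hβ1, hc]; push_cast; ring
    rw [this, Real.cos_add_int_mul_two_pi]
  have hcos2 : Real.cos β2 = Real.cos y.2.1 := by
    have : y.2.1 = β2 + (n : ℤ) * (2 * π) := by rw [hβ2, hc]; push_cast; ring
    rw [this, Real.cos_add_int_mul_two_pi]
  have hcp1 : 0 < Real.cos β1 :=
    Real.cos_pos_of_mem_Ioo ⟨by linarith [hb1.1], hb1.2⟩
  have hcp2 : 0 < Real.cos β2 :=
    Real.cos_pos_of_mem_Ioo ⟨by linarith [hb2.1], hb2.2⟩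
  have hrc1 : 1 ≤ x.2.2 * Real.cos β1 := by rw [hcos1]; exact hc1
  have hrc2 : 1 ≤ y.2.2 * Real.cos β2 := by rw [hcos2]; exact hc2
  -- components of the convex combination
  have e1 : (a • x + b • y).1 = a • x.1 + b • y.1 := rfl
  have e2 : (a • x + b • y).2.1 = a * x.2.1 + b * y.2.1 := rfl
  have e3 : (a • x + b • y).2.2 = a * x.2.2 + b * y.2.2 := rfl
  have hR : 0 < a * x.2.2 + b * y.2.2 := comb_pos hr1 hr2 ha hb hab
  refine ⟨⟨?_, ?_⟩, ?_, ?_⟩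
  · rw [e3]; exact hR
  · rw [e1, e3]
    calc ‖a • x.1 + b • y.1‖ ≤ ‖a • x.1‖ + ‖b • y.1‖ := norm_add_le _ _
      _ = a * ‖x.1‖ + b * ‖y.1‖ := by
          rw [norm_smul, norm_smul, Real.norm_eq_abs, Real.norm_eq_abs,
            abs_of_nonneg ha, abs_of_nonneg hb]
      _ < a * x.2.2 + b * y.2.2 := comb_lt hz1 hz2 ha hb hab
  · rw [e2]
    have : a * x.2.1 + b * y.2.1 - c = a * β1 + b * β2 := by
      rw [hβ1, hβ2]; linear_combination c * hab
    rw [this]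
    calc |a * β1 + b * β2| ≤ |a * β1| + |b * β2| := abs_add_le _ _
      _ = a * |β1| + b * |β2| := by
          rw [abs_mul, abs_mul, abs_of_nonneg ha, abs_of_nonneg hb]
      _ < a * (π / 2) + b * (π / 2) := comb_lt hα1 hα2 ha hb hab
      _ = π / 2 := by linear_combination (π / 2) * hab
  · rw [e2, e3]
    have hcomb : a * x.2.1 + b * y.2.1 = (a * β1 + b * β2) + (n : ℤ) * (2 * π) := by
      rw [hβ1, hβ2]; push_cast [hc]; linear_combination (2 * π * (n:ℝ)) * hab
    rw [hcomb, Real.cos_add_int_mul_two_pi]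
    -- concavity of cos on [-π/2, π/2]
    have hmem1 : β1 ∈ Set.Icc (-(π / 2)) (π / 2) := ⟨hb1.1.le, hb1.2.le⟩
    have hmem2 : β2 ∈ Set.Icc (-(π / 2)) (π / 2) := ⟨hb2.1.le, hb2.2.le⟩
    have hconc := strictConcaveOn_cos_Icc.concaveOn.2 hmem1 hmem2 ha hb hab
    simp only [smul_eq_mul] at hconc
    set C1 := Real.cos β1
    set C2 := Real.cos β2
    have hprod : 1 ≤ (x.2.2 * C2) * (y.2.2 * C1) := by nlinarith
    have hxy : 2 ≤ x.2.2 * C2 + y.2.2 * C1 :=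
      am_gm_aux (mul_pos hr1 hcp2) (mul_pos hr2 hcp1) hprod
    have hRC' : 1 ≤ (a * x.2.2 + b * y.2.2) * (a * C1 + b * C2) :=
      comb_sec hrc1 hrc2 hxy ha hb hab
    calc (1 : ℝ) ≤ (a * x.2.2 + b * y.2.2) * (a * C1 + b * C2) := hRC'
      _ ≤ (a * x.2.2 + b * y.2.2) * Real.cos (a * β1 + b * β2) :=
          mul_le_mul_of_nonneg_left hconc hR.le

lemma comp_eq_Ccomp {n : ℤ} {x : ℂ × ℝ × ℝ} (hx : x ∈ Ccomp n) :
    connectedComponentIn Scone x = Ccomp n := by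
  have hxS : x ∈ Scone := Ccomp_subset_Scone n hx
  apply Set.Subset.antisymm
  · have hpre : IsPreconnected (connectedComponentIn Scone x) :=
      isPreconnected_connectedComponentIn
    have hxU : x ∈ Ucell n := by rw [Ccomp_eq_inter] at hx; exact hx.2
    have hsub : connectedComponentIn Scone x ⊆ Ucell n := by
      apply hpre.subset_left_of_subset_union (isOpen_Ucell n)
        (isOpen_iUnion fun m : {m : ℤ // m ≠ n} => isOpen_Ucell m.1)
      · rw [Set.disjoint_iUnion_right]
        exact fun m => Ucell_disjoint (Ne.symm m.2)
      · intro y hy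
        have hyS : y ∈ Scone := connectedComponentIn_subset _ _ hy
        obtain ⟨m, hm⟩ := mem_Ccomp_of_mem_Scone hyS
        rw [Ccomp_eq_inter] at hm
        rcases eq_or_ne m n with h | h
        · exact Or.inl (h ▸ hm.2)
        · exact Or.inr (Set.mem_iUnion.mpr ⟨⟨m, h⟩, hm.2⟩)
      · exact ⟨x, mem_connectedComponentIn hxS, hxU⟩
    intro y hy
    rw [Ccomp_eq_inter]
    exact ⟨connectedComponentIn_subset _ _ hy, hsub hy⟩
  · exact (convex_Ccomp n).isPreconnected.subset_connectedComponentIn hx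
      (Ccomp_subset_Scone n)

/-- Canonical base point of `Ccomp n`. -/
noncomputable def basePt (n : ℤ) : ℂ × ℝ × ℝ := ((0 : ℂ), 2 * π * (n : ℝ), (1 : ℝ))

lemma basePt_mem (n : ℤ) : basePt n ∈ Ccomp n := by
  have hπ := pi_pos
  have hcos : Real.cos (2 * π * (n : ℝ)) = 1 := by
    have : (2 : ℝ) * π * (n : ℝ) = 0 + (n : ℤ) * (2 * π) := by push_cast; ring
    rw [this, Real.cos_add_int_mul_two_pi, Real.cos_zero]
  refine ⟨⟨one_pos, by simp [basePt]⟩, ?_, ?_⟩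
  · simp only [basePt, sub_self, abs_zero]; linarith
  · simp only [basePt]; rw [hcos]; norm_num

theorem stmt12 :
    (∀ x ∈ Scone, ∃ n : ℤ, connectedComponentIn Scone x = Ccomp n) ∧
    (∀ n : ℤ, (Ccomp n).Nonempty ∧
      ∀ x ∈ Ccomp n, connectedComponentIn Scone x = Ccomp n) ∧
    {T : Set (ℂ × ℝ × ℝ) | ∃ x ∈ Scone, connectedComponentIn Scone x = T}.Infinite ∧
    connectedComponentIn Scone ((0 : ℂ), (0 : ℝ), (1 : ℝ)) = Ie := by
  have hπ := pi_pos
  refine ⟨?_, ?_, ?_, ?_⟩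
  · intro x hx
    obtain ⟨n, hn⟩ := mem_Ccomp_of_mem_Scone hx
    exact ⟨n, comp_eq_Ccomp hn⟩
  · intro n
    exact ⟨⟨basePt n, basePt_mem n⟩, fun x hx => comp_eq_Ccomp hx⟩
  · have hinj : Function.Injective fun n : ℤ => Ccomp n := by
      intro n m h
      by_contra hne
      have h1 : basePt n ∈ Ucell n := by
        have := basePt_mem n; rw [Ccomp_eq_inter] at this; exact this.2
      have h2 : basePt n ∈ Ucell m := by
        have h' : Ccomp n = Ccomp m := h
        have : basePt n ∈ Ccomp m := h' ▸ basePt_mem n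
        rw [Ccomp_eq_inter] at this; exact this.2
      exact Set.disjoint_left.mp (Ucell_disjoint hne) h1 h2
    exact Set.infinite_of_injective_forall_mem hinj fun n =>
      ⟨basePt n, Ccomp_subset_Scone n (basePt_mem n), comp_eq_Ccomp (basePt_mem n)⟩
  · have he : ((0 : ℂ), (0 : ℝ), (1 : ℝ)) ∈ Ccomp 0 := by
      refine ⟨⟨one_pos, by simp⟩, ?_, ?_⟩
      · simp only [Int.cast_zero, mul_zero, sub_zero, abs_zero]; linarith
      · simp
    rw [comp_eq_Ccomp he]
    ext x
    simp only [Ccomp, Ie, Set.mem_sep_iff, Int.cast_zero, mul_zero, sub_zero]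
    constructor
    · rintro ⟨h1, h2, h3⟩
      have hcos : 0 < Real.cos x.2.1 := by
        rw [abs_lt] at h2
        exact Real.cos_pos_of_mem_Ioo ⟨by linarith [h2.1], h2.2⟩
      exact ⟨h1, h2, (div_le_iff₀ hcos).mpr (by linarith)⟩
    · rintro ⟨h1, h2, h3⟩
      have hcos : 0 < Real.cos x.2.1 := by
        rw [abs_lt] at h2
        exact Real.cos_pos_of_mem_Ioo ⟨by linarith [h2.1], h2.2⟩
      exact ⟨h1, h2, by have := (div_le_iff₀ hcos).mp h3; linarith⟩
end
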